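/- Let n ≥ 1 and let μ be a finite ℝ^n-valued Radon measure on ℝ^n. For α ∈ (0,1), define the Riesz potential I_α μ(x) := (μ_{n,1−α}/(n−α)) ∫_{ℝ^n} |x−y|^{α−n} dμ(y), which is defined for a.e. x ∈ ℝ^n and locally integrable. Then (I_α μ) ℒ^n ⇀ μ weakly* as α → 0^+, i.e., lim_{α→0^+} ∫_{ℝ^n} φ(x)·I_α μ(x) dx = ∫_{ℝ^n} φ · dμ for every φ ∈ C^0_c(ℝ^n;ℝ^n). -/

import Mathlib

open MeasureTheory Real Filter Topology Metric
open scoped ENNReal NNReal RealInnerProductSpace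

noncomputable section

abbrev En (n : ℕ) : Type := EuclideanSpace ℝ (Fin n)

/-- The normalizing constant `μ_{n,s}`. -/
def mun (n : ℕ) (s : ℝ) : ℝ :=
  (2 : ℝ) ^ s * Real.pi ^ (-(n : ℝ) / 2) *
    Real.Gamma (((n : ℝ) + s + 1) / 2) / Real.Gamma ((1 - s) / 2)

/-- The volume of the unit ball in `ℝ^n`. -/
def omegan (n : ℕ) : ℝ := Real.pi ^ ((n : ℝ) / 2) / Real.Gamma ((n : ℝ) / 2 + 1)

/-- The fractional `s`-divergence. -/
def fracDiv (n : ℕ) (s : ℝ) (φ : En n → En n) (x : En n) : ℝ :=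
  mun n s * ∫ y : En n, ⟪y - x, φ y - φ x⟫ / ‖y - x‖ ^ ((n : ℝ) + s + 1)

/-- The fractional `s`-gradient. -/
def fracGrad (n : ℕ) (s : ℝ) (f : En n → ℝ) (x : En n) : En n :=
  mun n s • ∫ y : En n, ((f y - f x) / ‖y - x‖ ^ ((n : ℝ) + s + 1)) • (y - x)

/-- The classical divergence. -/
def cdiv (n : ℕ) (φ : En n → En n) (x : En n) : ℝ :=
  ∑ i : Fin n, fderiv ℝ φ x (EuclideanSpace.single i 1) i

/-- The fractional `s`-variation of `f` on an open set `Ω`. -/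
def fvar (n : ℕ) (s : ℝ) (f : En n → ℝ) (Ω : Set (En n)) : ℝ≥0∞ :=
  ⨆ φ : {φ : En n → En n //
      ContDiff ℝ (⊤ : ℕ∞) φ ∧ HasCompactSupport φ ∧ tsupport φ ⊆ Ω ∧ ∀ x, ‖φ x‖ ≤ 1},
    ENNReal.ofReal (∫ x, f x * fracDiv n s φ.1 x)

/-- De Giorgi's variation of `f` on an open set `Ω`. -/
def cvar (n : ℕ) (f : En n → ℝ) (Ω : Set (En n)) : ℝ≥0∞ :=
  ⨆ φ : {φ : En n → En n //
      ContDiff ℝ (⊤ : ℕ∞) φ ∧ HasCompactSupport φ ∧ tsupport φ ⊆ Ω ∧ ∀ x, ‖φ x‖ ≤ 1},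
    ENNReal.ofReal (∫ x, f x * cdiv n φ.1 x)


/-!
By Fubini, `∫ φ · I_α μ = ∫ (I_α φ) · σ dν`, where `I_α φ (y) = c_α ∫ |x - y|^(α-n) φ(x) dx`.
Integrating in polar coordinates, `∫_{B_r} |z|^(α-n) dz = n ω_n r^α / α`, while
`c_α = μ_{n,1-α} / (n - α) ∼ α / (n ω_n)` as `α → 0⁺` because `Γ(α/2) ∼ 2/α`. So the kernels
`c_α |·|^(α-n)` have mass tending to `1` near the origin and tend to `0` uniformly away from it:
they form an approximate identity, and `I_α φ → φ` pointwise. Splitting `supp φ` at distance `1`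
from `y` gives the uniform bound `|I_α φ| ≤ c_α ‖φ‖_∞ (n ω_n / α + |supp φ|)`, which stays
bounded, and dominated convergence against `|σ| ν` concludes.
-/

open Module Set

theorem pow_sub_one_mul_rpow {t : ℝ} (ht : 0 < t) (d : ℕ) (hd : d ≠ 0) (s : ℝ) :
    t ^ (d - 1) * t ^ s = t ^ (s + d - 1) := by
  rw [← Real.rpow_natCast, ← Real.rpow_add ht, Nat.cast_sub (Nat.one_le_iff_ne_zero.2 hd)]
  ring_nf

theorem tendsto_nhdsGT_zero_of_tendsto_div_self {c : ℝ → ℝ} {L : ℝ}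
    (hc : Tendsto (fun α => c α / α) (𝓝[>] 0) (𝓝 L)) : Tendsto c (𝓝[>] 0) (𝓝 0) := by
  have := (tendsto_nhdsWithin_of_tendsto_nhds tendsto_id).mul hc
  rw [zero_mul] at this
  refine this.congr' (eventually_nhdsWithin_of_forall fun α (hα : 0 < α) => ?_)
  exact mul_div_cancel₀ _ hα.ne'

theorem eventually_nonneg_of_tendsto_div_self {c : ℝ → ℝ} {L : ℝ}
    (hc : Tendsto (fun α => c α / α) (𝓝[>] 0) (𝓝 L)) (hL : 0 < L) : ∀ᶠ α in 𝓝[>] 0, 0 ≤ c α := by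
  filter_upwards [hc.eventually (lt_mem_nhds hL), self_mem_nhdsWithin] with α hcα (hα : 0 < α)
  exact ((div_pos_iff_of_pos_right hα).1 hcα).le

theorem preimage_sub_ball_zero {E : Type*} [SeminormedAddCommGroup E] (y : E) (r : ℝ) :
    (· - y) ⁻¹' ball 0 r = ball y r := by
  ext x
  simp [dist_eq_norm]

theorem norm_sub_rpow_le_one_of_notMem_ball {E : Type*} [SeminormedAddCommGroup E] {s : ℝ}
    (hs0 : s ≤ 0) {x y : E} (hx : x ∉ ball y 1) : ‖x - y‖ ^ s ≤ 1 := by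
  rw [mem_ball, dist_eq_norm, not_lt] at hx
  exact Real.rpow_le_one_of_one_le_of_nonpos hx hs0

theorem tendstoUniformlyOn_mul_norm_sub_rpow_sub {E : Type*} [SeminormedAddCommGroup E]
    {c : ℝ → ℝ} (hc : Tendsto c (𝓝[>] 0) (𝓝 0)) {d : ℝ} (hd : 0 < d) {u : Set E} (hu : IsOpen u)
    {y : E} (hy : y ∈ u) :
    TendstoUniformlyOn (fun α x => c α * ‖x - y‖ ^ (α - d)) 0 (𝓝[>] 0) uᶜ := by
  obtain ⟨r, hr, hru⟩ := Metric.isOpen_iff.1 hu y hy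
  set ρ := min r 1
  have hρ : 0 < ρ := lt_min hr one_pos
  have hfar : ∀ x ∈ uᶜ, ρ ≤ ‖x - y‖ := fun x hx => by
    by_contra! h
    exact hx (hru (mem_ball_iff_norm.2 (h.trans_le (min_le_left _ _))))
  have hbound : Tendsto (fun α => |c α| * ρ ^ (-d)) (𝓝[>] 0) (𝓝 0) := by
    simpa using hc.abs.mul_const (ρ ^ (-d))
  rw [tendstoUniformlyOn_iff]
  intro ε hε
  filter_upwards [hbound.eventually (gt_mem_nhds hε), Ioo_mem_nhdsGT hd] with α hα hαd x hx
  rw [Pi.zero_apply, dist_zero_left, norm_mul, Real.norm_eq_abs,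
    Real.norm_of_nonneg (Real.rpow_nonneg (norm_nonneg _) _)]
  calc |c α| * ‖x - y‖ ^ (α - d) ≤ |c α| * ρ ^ (-d) := by
        gcongr
        calc ‖x - y‖ ^ (α - d) ≤ ρ ^ (α - d) :=
              Real.rpow_le_rpow_of_nonpos hρ (hfar x hx) (by linarith [hαd.2])
          _ ≤ ρ ^ (-d) := Real.rpow_le_rpow_of_exponent_ge hρ (min_le_right _ _)
              (by linarith [hαd.1])
    _ < ε := hα

section InnerFubini

variable {X Y F : Type*} [MeasurableSpace X] [MeasurableSpace Y]
  [NormedAddCommGroup F] [InnerProductSpace ℝ F] [CompleteSpace F]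

-- The factor `‖c‖` in `hint` lets the case `c = 0` go through without any integrability.
theorem inner_integral_smul_eq_integral_mul_inner {ν : Measure Y} (c : F) {f : Y → ℝ} {σ : Y → F}
    (hfσ : AEStronglyMeasurable (fun y => f y • σ y) ν)
    (hint : Integrable (fun y => f y * (‖c‖ * ‖σ y‖)) ν) :
    ⟪c, ∫ y, f y • σ y ∂ν⟫ = ∫ y, f y * ⟪c, σ y⟫ ∂ν := by
  rcases eq_or_ne c 0 with rfl | hc
  · simp
  have hfσi : Integrable (fun y => f y • σ y) ν := by
    refine (hint.norm.const_mul ‖c‖⁻¹).mono' hfσ (Eventually.of_forall fun y => ?_)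
    rw [norm_smul, norm_mul, norm_mul, norm_norm, norm_norm, mul_left_comm,
      inv_mul_cancel_left₀ (norm_ne_zero_iff.2 hc)]
  rw [← integral_inner hfσi]
  simp_rw [inner_smul_right]

theorem integral_inner_integral_smul_comm {μ : Measure X} {ν : Measure Y} [SFinite μ] [SFinite ν]
    {k : X → Y → ℝ} {φ : X → F} {σ : Y → F}
    (hk : AEStronglyMeasurable (Function.uncurry k) (μ.prod ν))
    (hφ : AEStronglyMeasurable φ μ) (hσ : AEStronglyMeasurable σ ν)
    (hint : Integrable (fun p : X × Y => k p.1 p.2 * (‖φ p.1‖ * ‖σ p.2‖)) (μ.prod ν)) :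
    ∫ x, ⟪φ x, ∫ y, k x y • σ y ∂ν⟫ ∂μ = ∫ y, ⟪∫ x, k x y • φ x ∂μ, σ y⟫ ∂ν := by
  have hkσ : AEStronglyMeasurable (fun p : X × Y => k p.1 p.2 • σ p.2) (μ.prod ν) :=
    hk.smul hσ.comp_snd
  have hkφ : AEStronglyMeasurable (fun p : X × Y => k p.1 p.2 • φ p.1) (μ.prod ν) :=
    hk.smul hφ.comp_fst
  have hG : Integrable (Function.uncurry fun x y => k x y * ⟪φ x, σ y⟫) (μ.prod ν) := by
    refine hint.mono (hk.mul (hφ.comp_fst.inner hσ.comp_snd)) (Eventually.of_forall fun p => ?_)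
    simp only [Function.uncurry, norm_mul, norm_norm]
    exact mul_le_mul_of_nonneg_left (norm_inner_le_norm _ _) (norm_nonneg _)
  calc ∫ x, ⟪φ x, ∫ y, k x y • σ y ∂ν⟫ ∂μ = ∫ x, ∫ y, k x y * ⟪φ x, σ y⟫ ∂ν ∂μ := by
        refine integral_congr_ae ?_
        filter_upwards [hkσ.prodMk_left, hint.prod_right_ae] with x hx hix
        exact inner_integral_smul_eq_integral_mul_inner (φ x) hx hix
    _ = ∫ y, ∫ x, k x y * ⟪φ x, σ y⟫ ∂μ ∂ν := integral_integral_swap hG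
    _ = ∫ y, ⟪∫ x, k x y • φ x ∂μ, σ y⟫ ∂ν := by
        refine integral_congr_ae ?_
        filter_upwards [hkφ.prodMk_right, hint.prod_left_ae] with y hy hiy
        rw [real_inner_comm, inner_integral_smul_eq_integral_mul_inner (σ y) hy
          (by simpa only [mul_comm (‖σ y‖)] using hiy)]
        simp_rw [real_inner_comm]

end InnerFubini

theorem finrank_mul_measureReal_ball_pos {E : Type*} [NormedAddCommGroup E] [NormedSpace ℝ E]
    [FiniteDimensional ℝ E] [MeasurableSpace E] [Nontrivial E] (μ : Measure E)
    [μ.IsAddHaarMeasure] : 0 < finrank ℝ E * μ.real (ball (0 : E) 1) :=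
  mul_pos (Nat.cast_pos.2 finrank_pos)
    (ENNReal.toReal_pos (measure_ball_pos μ 0 one_pos).ne' measure_ball_lt_top.ne)

section RieszKernel

variable {E : Type*} [NormedAddCommGroup E] [NormedSpace ℝ E] [FiniteDimensional ℝ E]
  [MeasurableSpace E] [BorelSpace E] [Nontrivial E] (μ : Measure E) [μ.IsAddHaarMeasure]
  {s : ℝ}

theorem integrableOn_ball_norm_rpow (hs : -(finrank ℝ E : ℝ) < s) (r : ℝ) :
    IntegrableOn (fun x : E => ‖x‖ ^ s) (ball 0 r) μ := by
  rcases le_or_gt r 0 with hr | hr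
  · simp [ball_eq_empty.2 hr]
  rw [integrableOn_fun_norm_addHaar μ (f := fun t => t ^ s)]
  refine ((intervalIntegral.integrableOn_Ioo_rpow_iff hr).2
    (show -1 < s + finrank ℝ E - 1 by linarith)).congr_fun (fun t ht => ?_) measurableSet_Ioo
  rw [smul_eq_mul, pow_sub_one_mul_rpow ht.1 _ finrank_pos.ne']

theorem setIntegral_ball_norm_rpow (hs : -(finrank ℝ E : ℝ) < s) {r : ℝ} (hr : 0 ≤ r) :
    ∫ x in ball (0 : E) r, ‖x‖ ^ s ∂μ =
      finrank ℝ E * μ.real (ball 0 1) * (r ^ (s + finrank ℝ E) / (s + finrank ℝ E)) := by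
  have hsd : 0 < s + finrank ℝ E := by linarith
  have hball : ∫ x in ball (0 : E) r, ‖x‖ ^ s ∂μ = ∫ x, (Iio r).indicator (· ^ s) ‖x‖ ∂μ := by
    rw [← integral_indicator measurableSet_ball]
    congr 1 with x
    simp [indicator]
  have hradial : ∫ t in Ioi (0 : ℝ), t ^ (finrank ℝ E - 1) • (Iio r).indicator (· ^ s) t =
      ∫ t in (0)..r, t ^ (s + finrank ℝ E - 1) := calc
    _ = ∫ t in Ioi (0 : ℝ), (Iio r).indicator (· ^ (s + finrank ℝ E - 1)) t :=
      setIntegral_congr_fun measurableSet_Ioi fun t ht => by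
        by_cases htr : t < r <;>
          simp [htr, pow_sub_one_mul_rpow (mem_Ioi.1 ht) _ finrank_pos.ne']
    _ = _ := by
      rw [setIntegral_indicator measurableSet_Iio, Ioi_inter_Iio,
        intervalIntegral.integral_of_le hr, integral_Ioc_eq_integral_Ioo]
  rw [hball, integral_fun_norm_addHaar, hradial, integral_rpow (Or.inl (by linarith)),
    sub_add_cancel, Real.zero_rpow hsd.ne', sub_zero, nsmul_eq_mul, smul_eq_mul, mul_assoc]

theorem integrableOn_ball_norm_sub_rpow (hs : -(finrank ℝ E : ℝ) < s) (y : E) (r : ℝ) :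
    IntegrableOn (fun x : E => ‖x - y‖ ^ s) (ball y r) μ := by
  rw [← preimage_sub_ball_zero]
  exact ((measurePreserving_sub_right μ y).integrableOn_comp_preimage
    (measurableEmbedding_subRight y) (f := fun x => ‖x‖ ^ s)).2 (integrableOn_ball_norm_rpow μ hs r)

theorem setIntegral_ball_norm_sub_rpow (hs : -(finrank ℝ E : ℝ) < s) (y : E) {r : ℝ}
    (hr : 0 ≤ r) :
    ∫ x in ball y r, ‖x - y‖ ^ s ∂μ =
      finrank ℝ E * μ.real (ball 0 1) * (r ^ (s + finrank ℝ E) / (s + finrank ℝ E)) := by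
  rw [← preimage_sub_ball_zero, (measurePreserving_sub_right μ y).setIntegral_preimage_emb
    (measurableEmbedding_subRight y) (fun x => ‖x‖ ^ s), setIntegral_ball_norm_rpow μ hs hr]

theorem integrableOn_norm_sub_rpow (hs : -(finrank ℝ E : ℝ) < s) (hs0 : s ≤ 0) (y : E)
    {S : Set E} (hS : MeasurableSet S) (hSμ : μ S ≠ ∞) :
    IntegrableOn (fun x : E => ‖x - y‖ ^ s) S μ := by
  rw [← inter_union_sdiff S (ball y 1)]
  refine ((integrableOn_ball_norm_sub_rpow μ hs y 1).mono_set inter_subset_right).union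
    (Measure.integrableOn_of_bounded (M := 1) ((measure_mono sdiff_subset).trans_lt hSμ.lt_top).ne
      (by fun_prop : Measurable fun x : E => ‖x - y‖ ^ s).aestronglyMeasurable
      (ae_restrict_of_forall_mem (hS.diff measurableSet_ball) fun x hx => ?_))
  rw [Real.norm_of_nonneg (Real.rpow_nonneg (norm_nonneg _) _)]
  exact norm_sub_rpow_le_one_of_notMem_ball hs0 hx.2

theorem setIntegral_norm_sub_rpow_le (hs : -(finrank ℝ E : ℝ) < s) (hs0 : s ≤ 0) (y : E)
    {S : Set E} (hS : MeasurableSet S) (hSμ : μ S ≠ ∞) :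
    ∫ x in S, ‖x - y‖ ^ s ∂μ ≤ finrank ℝ E * μ.real (ball 0 1) / (s + finrank ℝ E) + μ.real S := by
  have hint := integrableOn_norm_sub_rpow μ hs hs0 y hS hSμ
  have hnonneg : ∀ x : E, 0 ≤ ‖x - y‖ ^ s := fun x => Real.rpow_nonneg (norm_nonneg _) _
  have hnear : ∫ x in S ∩ ball y 1, ‖x - y‖ ^ s ∂μ ≤
      finrank ℝ E * μ.real (ball 0 1) / (s + finrank ℝ E) := calc
    _ ≤ ∫ x in ball y 1, ‖x - y‖ ^ s ∂μ :=
      setIntegral_mono_set (integrableOn_ball_norm_sub_rpow μ hs y 1)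
        (Eventually.of_forall fun x => hnonneg x) inter_subset_right.eventuallyLE
    _ = _ := by rw [setIntegral_ball_norm_sub_rpow μ hs y zero_le_one, Real.one_rpow]; ring
  have hfar : ∫ x in S \ ball y 1, ‖x - y‖ ^ s ∂μ ≤ μ.real S := calc
    _ ≤ ‖∫ x in S \ ball y 1, ‖x - y‖ ^ s ∂μ‖ := Real.le_norm_self _
    _ ≤ 1 * μ.real (S \ ball y 1) := norm_setIntegral_le_of_norm_le_const
        ((measure_mono sdiff_subset).trans_lt hSμ.lt_top) fun x hx => by
          rw [Real.norm_of_nonneg (hnonneg x)]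
          exact norm_sub_rpow_le_one_of_notMem_ball hs0 hx.2
    _ ≤ μ.real S := by rw [one_mul]; exact measureReal_mono sdiff_subset hSμ
  rw [← integral_inter_add_sdiff measurableSet_ball hint]
  exact add_le_add hnear hfar

variable {F : Type*} [NormedAddCommGroup F] {φ : E → F}

theorem integrable_norm_sub_rpow_mul_norm (hs : -(finrank ℝ E : ℝ) < s) (hs0 : s ≤ 0)
    (hφ : Continuous φ) (hφc : HasCompactSupport φ) (y : E) :
    Integrable (fun x => ‖x - y‖ ^ s * ‖φ x‖) μ := by
  obtain ⟨M, hM⟩ := hφc.exists_bound_of_continuous hφ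
  refine IntegrableOn.integrable_of_forall_notMem_eq_zero (s := tsupport φ) ?_
    fun x hx => by rw [image_eq_zero_of_notMem_tsupport (f := φ) hx, norm_zero, mul_zero]
  refine Integrable.mono' ((integrableOn_norm_sub_rpow μ hs hs0 y
    (isClosed_tsupport φ).measurableSet (hφc.measure_lt_top (μ := μ)).ne).mul_const M) ?_
    (Eventually.of_forall fun x => ?_)
  · exact ((by fun_prop : Measurable fun x : E => ‖x - y‖ ^ s).aestronglyMeasurable.mul
      hφ.norm.aestronglyMeasurable).restrict
  · rw [norm_mul, norm_norm, Real.norm_of_nonneg (Real.rpow_nonneg (norm_nonneg _) _)]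
    exact mul_le_mul_of_nonneg_left (hM x) (Real.rpow_nonneg (norm_nonneg _) _)

theorem integral_norm_sub_rpow_mul_norm_le (hs : -(finrank ℝ E : ℝ) < s) (hs0 : s ≤ 0)
    (hφc : HasCompactSupport φ) {M : ℝ} (hM : ∀ x, ‖φ x‖ ≤ M) (y : E) :
    ∫ x, ‖x - y‖ ^ s * ‖φ x‖ ∂μ ≤
      M * (finrank ℝ E * μ.real (ball 0 1) / (s + finrank ℝ E) + μ.real (tsupport φ)) := by
  have hK := (isClosed_tsupport φ).measurableSet
  have hKμ := (hφc.measure_lt_top (μ := μ)).ne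
  have hM0 : 0 ≤ M := (norm_nonneg _).trans (hM 0)
  rw [← setIntegral_eq_integral_of_forall_compl_eq_zero
    fun x hx => by rw [image_eq_zero_of_notMem_tsupport (f := φ) hx, norm_zero, mul_zero]]
  calc ∫ x in tsupport φ, ‖x - y‖ ^ s * ‖φ x‖ ∂μ
      ≤ ∫ x in tsupport φ, ‖x - y‖ ^ s * M ∂μ :=
        integral_mono_of_nonneg (Eventually.of_forall fun x => by positivity)
          ((integrableOn_norm_sub_rpow μ hs hs0 y hK hKμ).mul_const M)
          (Eventually.of_forall fun x =>
            mul_le_mul_of_nonneg_left (hM x) (Real.rpow_nonneg (norm_nonneg _) _))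
    _ = M * ∫ x in tsupport φ, ‖x - y‖ ^ s ∂μ := by rw [integral_mul_const, mul_comm]
    _ ≤ _ := mul_le_mul_of_nonneg_left (setIntegral_norm_sub_rpow_le μ hs hs0 y hK hKμ) hM0

theorem integrable_norm_sub_rpow_mul_norm_mul_norm (hs : -(finrank ℝ E : ℝ) < s) (hs0 : s ≤ 0)
    (hφ : Continuous φ) (hφc : HasCompactSupport φ) {G : Type*} [NormedAddCommGroup G]
    {ν : Measure E} [SFinite ν] {σ : E → G} (hσ : Integrable σ ν) :
    Integrable (fun p : E × E => ‖p.1 - p.2‖ ^ s * (‖φ p.1‖ * ‖σ p.2‖)) (μ.prod ν) := by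
  obtain ⟨M, hM⟩ := hφc.exists_bound_of_continuous hφ
  have hk : Measurable fun p : E × E => ‖p.1 - p.2‖ ^ s * ‖φ p.1‖ :=
    (by fun_prop : Measurable fun p : E × E => ‖p.1 - p.2‖ ^ s).mul
      (hφ.norm.comp continuous_fst).measurable
  have hf : AEStronglyMeasurable (fun p : E × E => ‖p.1 - p.2‖ ^ s * (‖φ p.1‖ * ‖σ p.2‖))
      (μ.prod ν) :=
    (hk.aestronglyMeasurable.mul hσ.aestronglyMeasurable.norm.comp_snd).congr
      (Eventually.of_forall fun p => mul_assoc _ _ _)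
  have hslice : ∀ y, ∫ x, ‖‖x - y‖ ^ s * (‖φ x‖ * ‖σ y‖)‖ ∂μ =
      (∫ x, ‖x - y‖ ^ s * ‖φ x‖ ∂μ) * ‖σ y‖ := fun y => by
    rw [← integral_mul_const]
    congr 1 with x
    rw [Real.norm_of_nonneg (by positivity), mul_assoc]
  refine (integrable_prod_iff' hf).2 ⟨Eventually.of_forall fun y => ?_, ?_⟩
  · simpa only [mul_assoc] using
      (integrable_norm_sub_rpow_mul_norm μ hs hs0 hφ hφc y).mul_const ‖σ y‖
  · simp_rw [hslice]
    refine (hσ.norm.const_mul (M * (finrank ℝ E * μ.real (ball 0 1) / (s + finrank ℝ E) +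
      μ.real (tsupport φ)))).mono'
      (hk.stronglyMeasurable.integral_prod_left'.aestronglyMeasurable.mul
        hσ.norm.aestronglyMeasurable) (Eventually.of_forall fun y => ?_)
    rw [norm_mul, norm_norm, Real.norm_of_nonneg (integral_nonneg fun x => by positivity)]
    exact mul_le_mul_of_nonneg_right (integral_norm_sub_rpow_mul_norm_le μ hs hs0 hφc hM y)
      (norm_nonneg _)

theorem tendsto_smul_integral_norm_sub_rpow_smul [NormedSpace ℝ F] [CompleteSpace F]
    {c : ℝ → ℝ} (hc : Tendsto (fun α => c α / α) (𝓝[>] 0)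
      (𝓝 (finrank ℝ E * μ.real (ball 0 1))⁻¹))
    {g : E → F} (hg : Integrable g μ) {y : E} (hgy : ContinuousAt g y) :
    Tendsto (fun α => c α • ∫ x, ‖x - y‖ ^ (α - finrank ℝ E) • g x ∂μ) (𝓝[>] 0) (𝓝 (g y)) := by
  have hω := finrank_mul_measureReal_ball_pos μ
  have hmass : Tendsto (fun α => ∫ x in ball y 1, c α * ‖x - y‖ ^ (α - finrank ℝ E) ∂μ)
      (𝓝[>] 0) (𝓝 1) := by
    have := hc.mul_const (finrank ℝ E * μ.real (ball 0 1))
    rw [inv_mul_cancel₀ hω.ne'] at this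
    refine this.congr' (eventually_nhdsWithin_of_forall fun α (hα : 0 < α) => ?_)
    dsimp only
    rw [integral_const_mul, setIntegral_ball_norm_sub_rpow μ (by linarith) y zero_le_one,
      sub_add_cancel, Real.one_rpow]
    ring
  have hpeak := tendsto_integral_peak_smul_of_integrable_of_tendsto measurableSet_ball
    (ball_mem_nhds y one_pos) measure_ball_lt_top.ne
    ((eventually_nonneg_of_tendsto_div_self hc (inv_pos.2 hω)).mono fun α hα x =>
      mul_nonneg hα (Real.rpow_nonneg (norm_nonneg _) _))
    (fun u hu hyu => tendstoUniformlyOn_mul_norm_sub_rpow_sub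
      (tendsto_nhdsGT_zero_of_tendsto_div_self hc) (Nat.cast_pos.2 finrank_pos) hu hyu)
    hmass (Eventually.of_forall fun α => (by fun_prop : Measurable fun x : E =>
      c α * ‖x - y‖ ^ (α - finrank ℝ E)).aestronglyMeasurable) hg hgy
  refine hpeak.congr fun α => ?_
  simp_rw [← integral_smul, smul_smul]

theorem tendsto_integral_inner_smul_integral_norm_sub_rpow_smul [InnerProductSpace ℝ F]
    [CompleteSpace F] {c : ℝ → ℝ} (hc : Tendsto (fun α => c α / α) (𝓝[>] 0)
      (𝓝 (finrank ℝ E * μ.real (ball 0 1))⁻¹))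
    {ν : Measure E} [SFinite ν] {σ : E → F} (hσ : Integrable σ ν)
    (hφ : Continuous φ) (hφc : HasCompactSupport φ) :
    Tendsto (fun α => ∫ x, ⟪φ x, c α • ∫ y, ‖x - y‖ ^ (α - finrank ℝ E) • σ y ∂ν⟫ ∂μ)
      (𝓝[>] 0) (𝓝 (∫ y, ⟪φ y, σ y⟫ ∂ν)) := by
  set ω := μ.real (ball (0 : E) 1)
  have hω := finrank_mul_measureReal_ball_pos μ
  obtain ⟨M, hM⟩ := hφc.exists_bound_of_continuous hφ
  have hk : ∀ α : ℝ, Measurable fun p : E × E => ‖p.1 - p.2‖ ^ (α - finrank ℝ E) := fun α => by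
    fun_prop
  set ψ : ℝ → E → F := fun α y => c α • ∫ x, ‖x - y‖ ^ (α - finrank ℝ E) • φ x ∂μ
  have hsmall : ∀ᶠ α in 𝓝[>] (0 : ℝ), α ∈ Ioo 0 (finrank ℝ E : ℝ) :=
    Ioo_mem_nhdsGT (Nat.cast_pos.2 finrank_pos)
  have hswap : ∀ᶠ α in 𝓝[>] 0, ∫ x, ⟪φ x, c α • ∫ y, ‖x - y‖ ^ (α - finrank ℝ E) • σ y ∂ν⟫ ∂μ =
      ∫ y, ⟪ψ α y, σ y⟫ ∂ν := by
    filter_upwards [hsmall] with α hα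
    simp_rw [ψ, real_inner_smul_left, real_inner_smul_right, integral_const_mul]
    rw [integral_inner_integral_smul_comm (hk α).aestronglyMeasurable hφ.aestronglyMeasurable
      hσ.aestronglyMeasurable (integrable_norm_sub_rpow_mul_norm_mul_norm μ (by linarith [hα.1])
        (by linarith [hα.2]) hφ hφc hσ)]
  have hB : Tendsto (fun α => M * (c α / α * (finrank ℝ E * ω) + c α * μ.real (tsupport φ)))
      (𝓝[>] 0) (𝓝 M) := by
    have h1 := hc.mul_const (finrank ℝ E * ω)
    rw [inv_mul_cancel₀ hω.ne'] at h1
    simpa using (h1.add ((tendsto_nhdsGT_zero_of_tendsto_div_self hc).mul_const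
      (μ.real (tsupport φ)))).const_mul M
  have hψ : ∀ᶠ α in 𝓝[>] 0, ∀ y, ‖ψ α y‖ ≤ M + 1 := by
    filter_upwards [hsmall, eventually_nonneg_of_tendsto_div_self hc (inv_pos.2 hω),
      hB.eventually (gt_mem_nhds (lt_add_one M))] with α hα hcα hBα y
    calc ‖ψ α y‖ ≤ c α * ∫ x, ‖x - y‖ ^ (α - finrank ℝ E) * ‖φ x‖ ∂μ := by
          rw [norm_smul, Real.norm_of_nonneg hcα]
          refine mul_le_mul_of_nonneg_left ((norm_integral_le_integral_norm _).trans_eq ?_) hcα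
          congr 1 with x
          rw [norm_smul, Real.norm_of_nonneg (Real.rpow_nonneg (norm_nonneg _) _)]
      _ ≤ c α * (M * (finrank ℝ E * ω / α + μ.real (tsupport φ))) := by
          gcongr
          simpa using integral_norm_sub_rpow_mul_norm_le μ (s := α - finrank ℝ E)
            (by linarith [hα.1]) (by linarith [hα.2]) hφc hM y
      _ = M * (c α / α * (finrank ℝ E * ω) + c α * μ.real (tsupport φ)) := by
          field_simp
      _ ≤ M + 1 := hBα.le
  refine (tendsto_integral_filter_of_dominated_convergence (fun y => (M + 1) * ‖σ y‖)
    ?_ ?_ (hσ.norm.const_mul _) ?_).congr' (hswap.mono fun α h => h.symm)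
  · refine Eventually.of_forall fun α => AEStronglyMeasurable.inner ?_ hσ.aestronglyMeasurable
    have hkφ : StronglyMeasurable fun p : E × E => ‖p.1 - p.2‖ ^ (α - finrank ℝ E) • φ p.1 :=
      (hk α).stronglyMeasurable.smul (hφ.comp continuous_fst).stronglyMeasurable
    exact (hkφ.integral_prod_left' (μ := μ)).aestronglyMeasurable.const_smul (c α)
  · filter_upwards [hψ] with α hα
    exact Eventually.of_forall fun y => (norm_inner_le_norm _ _).trans
      (mul_le_mul_of_nonneg_right (hα y) (norm_nonneg _))
  · exact Eventually.of_forall fun y =>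
      (tendsto_smul_integral_norm_sub_rpow_smul μ hc (hφ.integrable_of_hasCompactSupport hφc)
        hφ.continuousAt).inner tendsto_const_nhds

end RieszKernel

theorem mun_one_sub_div_self (n : ℕ) {α : ℝ} (hα : 0 < α) :
    mun n (1 - α) / α =
      2 ^ (-α) * π ^ (-(n : ℝ) / 2) * Gamma ((n - α) / 2 + 1) / Gamma (α / 2 + 1) := by
  have hΓ : Gamma (α / 2 + 1) = α / 2 * Gamma (α / 2) := Gamma_add_one (by positivity)
  have hΓpos : 0 < Gamma (α / 2) := Gamma_pos_of_pos (by positivity)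
  have h2 : (2 : ℝ) ^ (1 - α) = 2 * 2 ^ (-α) := by
    rw [sub_eq_add_neg, rpow_add two_pos, rpow_one]
  rw [mun, hΓ, h2, show ((n : ℝ) + (1 - α) + 1) / 2 = (n - α) / 2 + 1 by ring,
    show (1 - (1 - α)) / 2 = α / 2 by ring]
  field_simp

theorem nontrivial_En {n : ℕ} (hn : n ≠ 0) : Nontrivial (En n) :=
  have : Nonempty (Fin n) := ⟨⟨0, Nat.pos_of_ne_zero hn⟩⟩
  inferInstance

theorem measureReal_ball_zero_one_eq_omegan {n : ℕ} (hn : n ≠ 0) :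
    volume.real (ball (0 : En n) 1) = omegan n := by
  have := nontrivial_En hn
  have hΓ : 0 < Gamma ((n : ℝ) / 2 + 1) := Gamma_pos_of_pos (by positivity)
  rw [measureReal_def, InnerProductSpace.volume_ball, finrank_euclideanSpace_fin,
    ENNReal.ofReal_one, one_pow, one_mul, ENNReal.toReal_ofReal (by positivity), omegan,
    sqrt_eq_rpow, ← rpow_natCast, ← rpow_mul pi_pos.le]
  ring_nf

theorem continuousAt_Gamma_of_pos {s : ℝ} (hs : 0 < s) : ContinuousAt Gamma s :=
  (differentiableAt_Gamma fun m => by linarith [(Nat.cast_nonneg m : (0 : ℝ) ≤ m)]).continuousAt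

theorem tendsto_mun_one_sub_div_sub_div_self {n : ℕ} (hn : n ≠ 0) :
    Tendsto (fun α => mun n (1 - α) / (n - α) / α) (𝓝[>] 0) (𝓝 (n * omegan n)⁻¹) := by
  set g : ℝ → ℝ := fun α =>
    2 ^ (-α) * π ^ (-(n : ℝ) / 2) * Gamma ((n - α) / 2 + 1) / Gamma (α / 2 + 1) / (n - α)
  have hn' : (n : ℝ) ≠ 0 := Nat.cast_ne_zero.2 hn
  have hg : ContinuousAt g 0 := by
    have h1 : ContinuousAt (fun α : ℝ => Gamma ((n - α) / 2 + 1)) 0 :=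
      (continuousAt_Gamma_of_pos (by simp; positivity)).comp (by fun_prop)
    have h2 : ContinuousAt (fun α : ℝ => Gamma (α / 2 + 1)) 0 :=
      (continuousAt_Gamma_of_pos (by simp)).comp (by fun_prop)
    have h0 : ContinuousAt (fun α : ℝ => (2 : ℝ) ^ (-α)) 0 :=
      (continuousAt_const_rpow two_ne_zero).comp (by fun_prop)
    refine (((h0.mul continuousAt_const).mul h1).div h2 ?_).div
      (by fun_prop) (by simpa using hn')
    simp
  have hg0 : g 0 = (n * omegan n)⁻¹ := by
    have : 0 < Gamma ((n : ℝ) / 2 + 1) := Gamma_pos_of_pos (by positivity)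
    simp only [g, omegan, neg_zero, rpow_zero, sub_zero, zero_div, zero_add, Gamma_one, div_one,
      rpow_neg pi_pos.le, neg_div]
    field_simp
  rw [← hg0]
  refine (hg.tendsto.mono_left nhdsWithin_le_nhds).congr'
    (eventually_nhdsWithin_of_forall fun α (hα : 0 < α) => ?_)
  simp only [g]
  rw [div_right_comm (mun n _), mun_one_sub_div_self n hα]

/-- If `μ = σ ν` is a finite `ℝ^n`-valued Radon measure (in polar form, `ν`
finite and `‖σ‖ = 1` `ν`-a.e.), then `(I_α μ) ℒ^n ⇀ μ` weakly* as `α → 0⁺`: for every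
continuous compactly supported `φ`,
`∫ φ(x)·I_α μ(x) dx → ∫ φ·dμ`, where
`I_α μ(x) = (μ_{n,1−α}/(n−α)) ∫ |x−y|^{α−n} dμ(y)`. -/
theorem stmt11 (n : ℕ) (hn : 1 ≤ n)
    (ν : Measure (En n)) [IsFiniteMeasure ν] (σ : En n → En n)
    (hσm : AEStronglyMeasurable σ ν) (hσ : ∀ᵐ x ∂ν, ‖σ x‖ = 1)
    (φ : En n → En n) (hφ : Continuous φ) (hφc : HasCompactSupport φ) :
    Tendsto (fun α : ℝ =>
        ∫ x, ⟪φ x, (mun n (1 - α) / ((n : ℝ) - α)) •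
          ∫ y, (‖x - y‖ ^ (α - (n : ℝ))) • σ y ∂ν⟫)
      (𝓝[>] (0 : ℝ)) (𝓝 (∫ x, ⟪φ x, σ x⟫ ∂ν)) := by
  have hn0 : n ≠ 0 := Nat.one_le_iff_ne_zero.1 hn
  have := nontrivial_En hn0
  have hσi : Integrable σ ν :=
    (integrable_const (1 : ℝ)).mono' hσm (hσ.mono fun x hx => hx.le)
  have hc := tendsto_mun_one_sub_div_sub_div_self hn0
  rw [← measureReal_ball_zero_one_eq_omegan hn0] at hc
  have hd : (finrank ℝ (En n) : ℝ) = n := by simp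
  simpa only [hd] using tendsto_integral_inner_smul_integral_norm_sub_rpow_smul volume
    (by rwa [hd]) hσi hφ hφc
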